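/- Let γ > 1 and 0 < c ≤ 2. There exists a constant C such that for every r ≥ 0, ∫_0^∞ s^{−γ} e^{−s r²} e^{−c/s} ds ≤ C e^{−c r/2}. -/

import Mathlib

/-!
For `c ≤ 8` and `s > 0` one has `s r² + c / s ≥ c r / 2 + c / (2 s)`, so the integrand is
bounded by `e^{-c r / 2} s^{-γ} e^{-c / (2 s)}`. Since `γ > 1` and `c > 0`, the last function is
integrable on `(0, ∞)`, and its integral serves as `C`.
-/

open MeasureTheory Real Set

/- The substitution `s = 1 / u` turns `s ^ (-γ) * exp (-a / s)` into the Gamma-type integrand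
`u ^ (γ - 2) * exp (-a * u)`, which is integrable on `(0, ∞)` exactly when `γ > 1`. -/
theorem integrableOn_rpow_neg_mul_exp_neg_div {γ a : ℝ} (hγ : 1 < γ) (ha : 0 < a) :
    IntegrableOn (fun s : ℝ => s ^ (-γ) * exp (-a / s)) (Ioi 0) := by
  have hGamma : IntegrableOn (fun u : ℝ => u ^ (γ - 2) * exp (-a * u ^ (1 : ℝ))) (Ioi 0) :=
    integrableOn_rpow_mul_exp_neg_mul_rpow (by linarith) one_pos ha
  refine ((integrableOn_Ioi_comp_rpow_iff' _ (neg_ne_zero.mpr one_ne_zero)).mpr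
    hGamma).congr_fun (fun s hs => ?_) measurableSet_Ioi
  have hs : 0 < s := hs
  simp only [smul_eq_mul, rpow_one]
  rw [← rpow_mul hs.le, ← mul_assoc, ← rpow_add hs, rpow_neg_one, div_eq_mul_inv]
  ring_nf

/- Multiplying by `2 s` reduces this to `2 x ^ 2 - c x + c ≥ 0` for `x = s r`, whose
discriminant `c ^ 2 - 8 c` is nonpositive. -/
theorem mul_div_two_add_div_le_mul_sq_add_div {c s : ℝ} (r : ℝ) (hc : 0 ≤ c) (hc8 : c ≤ 8)
    (hs : 0 < s) : c * r / 2 + c / 2 / s ≤ s * r ^ 2 + c / s := by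
  have hquad : 0 ≤ 2 * (s * r) ^ 2 - c * (s * r) + c := by
    nlinarith [sq_nonneg (4 * (s * r) - c), mul_nonneg hc (sub_nonneg.mpr hc8)]
  have hdiff : s * r ^ 2 + c / s - (c * r / 2 + c / 2 / s) =
      (2 * (s * r) ^ 2 - c * (s * r) + c) / (2 * s) := by
    field_simp
    ring
  have := div_nonneg hquad (by positivity : (0 : ℝ) ≤ 2 * s)
  linarith

theorem rpow_neg_mul_exp_mul_exp_le {γ c s : ℝ} (r : ℝ) (hc : 0 ≤ c) (hc8 : c ≤ 8)
    (hs : 0 < s) :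
    s ^ (-γ) * exp (-s * r ^ 2) * exp (-c / s) ≤
      exp (-c * r / 2) * (s ^ (-γ) * exp (-(c / 2) / s)) := by
  have hexp : exp (-s * r ^ 2) * exp (-c / s) ≤ exp (-c * r / 2) * exp (-(c / 2) / s) := by
    rw [← exp_add, ← exp_add, exp_le_exp]
    have := mul_div_two_add_div_le_mul_sq_add_div r hc hc8 hs
    simp only [neg_mul, neg_div]
    linarith
  calc s ^ (-γ) * exp (-s * r ^ 2) * exp (-c / s)
      = s ^ (-γ) * (exp (-s * r ^ 2) * exp (-c / s)) := mul_assoc _ _ _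
    _ ≤ s ^ (-γ) * (exp (-c * r / 2) * exp (-(c / 2) / s)) :=
        mul_le_mul_of_nonneg_left hexp (rpow_nonneg hs.le _)
    _ = exp (-c * r / 2) * (s ^ (-γ) * exp (-(c / 2) / s)) := by ring

/-- For `γ > 1` and `0 < c ≤ 2`, there is a constant `C` such that for every `r ≥ 0`,
`∫_0^∞ s^{-γ} e^{-s r²} e^{-c/s} ds ≤ C e^{-c r/2}`. -/
theorem stmt11 (γ c : ℝ) (hγ : 1 < γ) (hc : 0 < c) (hc2 : c ≤ 2) :
    ∃ C : ℝ, ∀ r : ℝ, 0 ≤ r →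
      ∫ s in Set.Ioi (0 : ℝ), s ^ (-γ) * Real.exp (-s * r ^ 2) * Real.exp (-c / s) ≤
        C * Real.exp (-c * r / 2) := by
  have hg := integrableOn_rpow_neg_mul_exp_neg_div hγ (half_pos hc)
  refine ⟨∫ s in Ioi (0 : ℝ), s ^ (-γ) * exp (-(c / 2) / s), fun r _ => ?_⟩
  have hnonneg : ∀ s ∈ Ioi (0 : ℝ), 0 ≤ s ^ (-γ) * exp (-s * r ^ 2) * exp (-c / s) :=
    fun s hs => by have : 0 < s := hs; positivity
  calc ∫ s in Ioi (0 : ℝ), s ^ (-γ) * exp (-s * r ^ 2) * exp (-c / s)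
      ≤ ∫ s in Ioi (0 : ℝ), exp (-c * r / 2) * (s ^ (-γ) * exp (-(c / 2) / s)) :=
        integral_mono_of_nonneg (ae_restrict_of_forall_mem measurableSet_Ioi hnonneg)
          (hg.const_mul _) (ae_restrict_of_forall_mem measurableSet_Ioi fun s hs =>
            rpow_neg_mul_exp_mul_exp_le r hc.le (by linarith) hs)
    _ = (∫ s in Ioi (0 : ℝ), s ^ (-γ) * exp (-(c / 2) / s)) * exp (-c * r / 2) := by
        rw [integral_const_mul, mul_comm]
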